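/- arXiv:1509.03294 — 2 statements merged into one kernel-verified Lean document; each statement's English description precedes it below -/
import Mathlib

section
/- Let n : ℕ. On ℂⁿ × ℂⁿ define the antisymmetric bilinear form ω((x,y),(x',y')) = ∑_i (x i * y' i − y i * x' i) and the hermitian form h((x,y),(x',y')) = ∑_i conj(x i) * x' i − ∑_i conj(y i) * y' i. For Z ∈ Matrix (Fin n) (Fin n) ℂ let W_Z = {(Z *ᵥ w, w) | w ∈ (Fin n → ℂ)}. Then: (a) ω vanishes identically on W_Z × W_Z if and only if Z is symmetric (Zᵀ = Z); (b) W_Z is ω-isotropic and satisfies h(v,v) < 0 for every nonzero v ∈ W_Z if and only if Zᵀ = Z and 1 − Zᴴ * Z is positive definite. -/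
open Matrix
open scoped ComplexOrder

/-!
On the graph `W_Z`, `ω ((Z w, w), (Z w', w')) = wᵀ (Zᵀ - Z) w'` and
`h ((Z w, w), (Z w, w)) = -wᴴ (1 - Zᴴ Z) w`. Isotropy is thus the vanishing of the bilinear form
of `Zᵀ - Z`, and `h`-negativity is positivity of the form of `1 - Zᴴ Z`, a matrix that is
Hermitian for every `Z`.
-/

namespace Matrix

variable {m n R : Type*} [Fintype n]

theorem eq_zero_of_forall_dotProduct_mulVec_eq_zero [Fintype m] [DecidableEq m] [DecidableEq n]
    [NonAssocSemiring R] {A : Matrix m n R} (h : ∀ v w, v ⬝ᵥ (A *ᵥ w) = 0) : A = 0 := by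
  ext i j
  simpa [single_dotProduct, mulVec_single] using h (Pi.single i 1) (Pi.single j 1)

theorem mulVec_dotProduct_sub_dotProduct_mulVec [CommRing R] (A : Matrix n n R)
    (v w : n → R) :
    (A *ᵥ v) ⬝ᵥ w - v ⬝ᵥ (A *ᵥ w) = v ⬝ᵥ ((Aᵀ - A) *ᵥ w) := by
  rw [sub_mulVec, dotProduct_sub, dotProduct_mulVec v Aᵀ, vecMul_transpose]

theorem transpose_eq_self_iff_forall_dotProduct [CommRing R] [DecidableEq n]
    (A : Matrix n n R) :
    Aᵀ = A ↔ ∀ v w, (A *ᵥ v) ⬝ᵥ w = v ⬝ᵥ (A *ᵥ w) := by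
  simp_rw [← sub_eq_zero (a := (A *ᵥ _) ⬝ᵥ _), mulVec_dotProduct_sub_dotProduct_mulVec]
  exact ⟨fun h v w => by rw [h, sub_self, zero_mulVec, dotProduct_zero],
    fun h => sub_eq_zero.mp (eq_zero_of_forall_dotProduct_mulVec_eq_zero h)⟩

theorem star_mulVec_dotProduct_mulVec_sub [Fintype m] [DecidableEq n] [Ring R] [StarRing R]
    (A : Matrix m n R) (v : n → R) :
    star (A *ᵥ v) ⬝ᵥ (A *ᵥ v) - star v ⬝ᵥ v = -(star v ⬝ᵥ ((1 - Aᴴ * A) *ᵥ v)) := by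
  rw [sub_mulVec, one_mulVec, dotProduct_sub, neg_sub, ← mulVec_mulVec,
    dotProduct_mulVec (star v) Aᴴ, star_mulVec]

theorem posDef_one_sub_conjTranspose_mul_self_iff [Fintype m] [DecidableEq n] [Ring R]
    [StarRing R] [PartialOrder R] [StarOrderedRing R] (A : Matrix m n R) :
    (1 - Aᴴ * A).PosDef ↔ ∀ v ≠ 0, star (A *ᵥ v) ⬝ᵥ (A *ᵥ v) - star v ⬝ᵥ v < 0 := by
  simp_rw [posDef_iff_dotProduct_mulVec, star_mulVec_dotProduct_mulVec_sub, neg_lt_zero]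
  exact and_iff_right (isHermitian_one.sub (isHermitian_conjTranspose_mul_self A))

end Matrix

theorem forall_mem_graph_iff {α β : Type*} (f : α → β) {P : β × α → Prop} :
    (∀ v ∈ {v : β × α | ∃ w, v = (f w, w)}, P v) ↔ ∀ w, P (f w, w) := by
  simp

/-- Bounded symmetric domain of `Sp(n;ℝ)` inside the `SU(n,n)` domain: the graph `W_Z` is
isotropic for the symplectic form `ω` iff `Z` is symmetric, and is `ω`-isotropic and
`h`-negative definite iff `Zᵀ = Z` and `1 − Zᴴ Z` is positive definite. -/
theorem stmt_7 (n : ℕ)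
    (ω h : ((Fin n → ℂ) × (Fin n → ℂ)) → ((Fin n → ℂ) × (Fin n → ℂ)) → ℂ)
    (hω : ∀ v v', ω v v' = ∑ i, (v.1 i * v'.2 i - v.2 i * v'.1 i))
    (hh : ∀ v v', h v v' =
      (∑ i, starRingEnd ℂ (v.1 i) * v'.1 i) - ∑ i, starRingEnd ℂ (v.2 i) * v'.2 i)
    (Z : Matrix (Fin n) (Fin n) ℂ) :
    ((∀ v ∈ {v : (Fin n → ℂ) × (Fin n → ℂ) | ∃ w, v = (Z *ᵥ w, w)},
        ∀ v' ∈ {v : (Fin n → ℂ) × (Fin n → ℂ) | ∃ w, v = (Z *ᵥ w, w)},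
        ω v v' = 0) ↔ Z.transpose = Z) ∧
    (((∀ v ∈ {v : (Fin n → ℂ) × (Fin n → ℂ) | ∃ w, v = (Z *ᵥ w, w)},
        ∀ v' ∈ {v : (Fin n → ℂ) × (Fin n → ℂ) | ∃ w, v = (Z *ᵥ w, w)},
        ω v v' = 0) ∧
      (∀ v ∈ {v : (Fin n → ℂ) × (Fin n → ℂ) | ∃ w, v = (Z *ᵥ w, w)},
        v ≠ 0 → h v v < 0)) ↔
      (Z.transpose = Z ∧ (1 - Z.conjTranspose * Z).PosDef)) := by
  have ω_graph (w w' : Fin n → ℂ) :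
      ω (Z *ᵥ w, w) (Z *ᵥ w', w') = (Z *ᵥ w) ⬝ᵥ w' - w ⬝ᵥ (Z *ᵥ w') := by
    rw [hω, Finset.sum_sub_distrib]
    rfl
  have h_graph (w : Fin n → ℂ) :
      h (Z *ᵥ w, w) (Z *ᵥ w, w) = star (Z *ᵥ w) ⬝ᵥ (Z *ᵥ w) - star w ⬝ᵥ w := by
    rw [hh]
    rfl
  have graph_ne_zero (w : Fin n → ℂ) : (Z *ᵥ w, w) ≠ 0 ↔ w ≠ 0 := by
    refine not_congr ⟨congrArg Prod.snd, ?_⟩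
    rintro rfl
    simp
  have isotropic_iff :
      (∀ v ∈ {v : (Fin n → ℂ) × (Fin n → ℂ) | ∃ w, v = (Z *ᵥ w, w)},
        ∀ v' ∈ {v : (Fin n → ℂ) × (Fin n → ℂ) | ∃ w, v = (Z *ᵥ w, w)},
        ω v v' = 0) ↔ Zᵀ = Z := by
    simp only [forall_mem_graph_iff, ω_graph, sub_eq_zero,
      transpose_eq_self_iff_forall_dotProduct]
  refine ⟨isotropic_iff, and_congr isotropic_iff ?_⟩
  simp only [forall_mem_graph_iff, h_graph, graph_ne_zero,
    posDef_one_sub_conjTranspose_mul_self_iff]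
end

section
/- Let p, q : ℕ and ℍ = Quaternion ℝ. On (Fin p → ℍ) × (Fin q → ℍ) define h(v) = ∑_i star (v.1 i) * (v.1 i) − ∑_j star (v.2 j) * (v.2 j) ∈ ℍ. Let W be a subset of (Fin p → ℍ) × (Fin q → ℍ) closed under addition and under right multiplication by quaternion scalars (v ∈ W, c ∈ ℍ implies (fun i => v.1 i * c, fun j => v.2 j * c) ∈ W), and suppose (h v).re < 0 for every v ∈ W with v ≠ 0. Then: (a) the projection v ↦ v.2 is injective on W; (b) if this projection maps W onto (Fin q → ℍ), then there is a unique X ∈ Matrix (Fin p) (Fin q) ℍ with W = {(X *ᵥ w, w) | w ∈ (Fin q → ℍ)}, and for this X one has (star w ⬝ᵥ ((1 − Xᴴ * X) *ᵥ w)).re > 0 for every nonzero w ∈ (Fin q → ℍ). -/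
open Matrix

/-!
On a vector with `v.2 = 0` the real part of `h v` is `∑ ‖v.1 i‖² ≥ 0`, so negativity of `h` on
`W` forces `W ∩ (ℍ^p × 0) = 0`; as `W` is a right ℍ-subspace (an `ℍᵐᵒᵖ`-submodule), `v ↦ v.2` is
injective on it. If it is also onto, `W` is the graph of a right-ℍ-linear map `ℍ^q → ℍ^p`, which
is `w ↦ X *ᵥ w` for a unique matrix `X`, and `h (X *ᵥ w, w) = -(star w ⬝ᵥ ((1 - Xᴴ * X) *ᵥ w))`.
-/

theorem Quaternion.re_star_dotProduct_self_nonneg {R n : Type*} [CommRing R] [LinearOrder R]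
    [IsStrictOrderedRing R] [Fintype n] (v : n → Quaternion R) :
    0 ≤ (star v ⬝ᵥ v).re := by
  have hre := map_sum (QuaternionAlgebra.reₗ (-1 : R) 0 (-1)) (fun i => star (v i) * v i) .univ
  refine (Finset.sum_nonneg fun i _ => ?_).trans_eq hre.symm
  change 0 ≤ (star (v i) * v i).re
  rw [Quaternion.star_mul_self, Quaternion.re_coe]
  exact Quaternion.normSq_nonneg

theorem Matrix.star_dotProduct_one_sub_conjTranspose_mul_mulVec {R m n : Type*} [Ring R]
    [StarRing R] [Fintype m] [Fintype n] [DecidableEq n] (X : Matrix m n R) (w : n → R) :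
    star w ⬝ᵥ ((1 - Xᴴ * X) *ᵥ w) = star w ⬝ᵥ w - star (X *ᵥ w) ⬝ᵥ (X *ᵥ w) := by
  rw [sub_mulVec, one_mulVec, dotProduct_sub, ← mulVec_mulVec, dotProduct_mulVec,
    ← star_mulVec]

theorem LinearMap.apply_eq_mulVec_of_apply_single {R m n : Type*} [Semiring R] [Fintype n]
    [DecidableEq n] (f : (n → R) →ₗ[Rᵐᵒᵖ] m → R) (w : n → R) :
    f w = of (fun i j => f (Pi.single j 1) i) *ᵥ w := by
  suffices f = mulVecBilin R Rᵐᵒᵖ (of fun i j => f (Pi.single j 1) i) from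
    LinearMap.congr_fun this w
  refine LinearMap.pi_ext fun j x => ?_
  have hsingle : Pi.single j x = MulOpposite.op x • (Pi.single j 1 : n → R) := by
    rw [← Pi.single_smul, MulOpposite.smul_eq_mul_unop, MulOpposite.unop_op, one_mul]
  rw [mulVecBilin_apply, mulVec_single, hsingle, map_smul]
  rfl

namespace Submodule

variable {R M N : Type*} [Ring R] [AddCommGroup M] [AddCommGroup N] [Module R M] [Module R N]

def ofNonempty (W : Set M) (hW : W.Nonempty) (hadd : ∀ v ∈ W, ∀ v' ∈ W, v + v' ∈ W)
    (hsmul : ∀ v ∈ W, ∀ c : R, c • v ∈ W) : Submodule R M where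
  carrier := W
  add_mem' hv hv' := hadd _ hv _ hv'
  zero_mem' := by
    obtain ⟨v, hv⟩ := hW
    simpa using hsmul v hv 0
  smul_mem' c _ hv := hsmul _ hv c

theorem injOn_snd (S : Submodule R (M × N)) (hker : ∀ v ∈ S, v.2 = 0 → v = 0) :
    Set.InjOn Prod.snd (S : Set (M × N)) := fun v hv v' hv' h =>
  sub_eq_zero.1 <| hker _ (S.sub_mem hv hv') (by rw [Prod.snd_sub, h, sub_self])

theorem exists_linearMap_mem_iff_fst_eq (S : Submodule R (M × N))
    (hker : ∀ v ∈ S, v.2 = 0 → v = 0) (hsurj : ∀ w, ∃ v ∈ S, v.2 = w) :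
    ∃ f : N →ₗ[R] M, ∀ v, v ∈ S ↔ v.1 = f v.2 := by
  let e : S ≃ₗ[R] N := LinearEquiv.ofBijective (LinearMap.snd R M N ∘ₗ S.subtype)
    ⟨fun v v' h => Subtype.ext (S.injOn_snd hker v.2 v'.2 h),
     fun w => let ⟨v, hv, hvw⟩ := hsurj w; ⟨⟨v, hv⟩, hvw⟩⟩
  refine ⟨LinearMap.fst R M N ∘ₗ S.subtype ∘ₗ e.symm, fun v => ⟨fun hv => ?_, fun hv => ?_⟩⟩
  · have : e.symm v.2 = ⟨v, hv⟩ := e.symm_apply_eq.2 rfl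
    simp [this]
  · have hsnd : (e.symm v.2 : M × N).2 = v.2 := e.apply_symm_apply v.2
    have : (e.symm v.2 : M × N) = v := Prod.ext hv.symm hsnd
    exact this ▸ (e.symm v.2).2

end Submodule

/-- Quaternionic bounded symmetric domain of `Sp(p,q)`: an `h`-negative definite right
ℍ-subspace `W ⊆ ℍ^p × ℍ^q` projects injectively to `ℍ^q`, and if that projection is onto
then `W` is the graph of a unique quaternionic matrix `X` with `1 − Xᴴ X` positive
definite. -/
theorem stmt_17 (p q : ℕ)
    (h : ((Fin p → Quaternion ℝ) × (Fin q → Quaternion ℝ)) → Quaternion ℝ)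
    (hh : ∀ v, h v = (∑ i, star (v.1 i) * v.1 i) - ∑ j, star (v.2 j) * v.2 j)
    (W : Set ((Fin p → Quaternion ℝ) × (Fin q → Quaternion ℝ)))
    (Wadd : ∀ v ∈ W, ∀ v' ∈ W, v + v' ∈ W)
    (Wsmul : ∀ v ∈ W, ∀ c : Quaternion ℝ,
      ((fun i => v.1 i * c, fun j => v.2 j * c) :
        (Fin p → Quaternion ℝ) × (Fin q → Quaternion ℝ)) ∈ W)
    (Wneg : ∀ v ∈ W, v ≠ 0 → (h v).re < 0) :
    (∀ v ∈ W, ∀ v' ∈ W, v.2 = v'.2 → v = v') ∧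
    ((∀ w : Fin q → Quaternion ℝ, ∃ v ∈ W, v.2 = w) →
      ∃! X : Matrix (Fin p) (Fin q) (Quaternion ℝ),
        W = {v | ∃ w, v = (X *ᵥ w, w)} ∧
        ∀ w : Fin q → Quaternion ℝ, w ≠ 0 →
          (star w ⬝ᵥ ((1 - X.conjTranspose * X) *ᵥ w)).re > 0) := by
  have hform : ∀ v, h v = star v.1 ⬝ᵥ v.1 - star v.2 ⬝ᵥ v.2 := hh
  have hker : ∀ v ∈ W, v.2 = 0 → v = 0 := fun v hv hv₂ => by
    by_contra hv₀
    have hneg := Wneg v hv hv₀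
    rw [hform, hv₂, star_zero, dotProduct_zero, sub_zero] at hneg
    exact hneg.not_ge (Quaternion.re_star_dotProduct_self_nonneg v.1)
  have Wsmul' : ∀ v ∈ W, ∀ c : (Quaternion ℝ)ᵐᵒᵖ, c • v ∈ W := fun v hv c => Wsmul v hv c.unop
  refine ⟨fun v hv v' hv' => (Submodule.ofNonempty W ⟨v, hv⟩ Wadd Wsmul').injOn_snd hker hv hv',
    fun hsurj => ?_⟩
  obtain ⟨v₀, hv₀, -⟩ := hsurj 0
  obtain ⟨f, hf⟩ :=
    (Submodule.ofNonempty W ⟨v₀, hv₀⟩ Wadd Wsmul').exists_linearMap_mem_iff_fst_eq hker hsurj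
  set X := of fun i j => f (Pi.single j 1) i
  have hW : ∀ v, v ∈ W ↔ v.1 = X *ᵥ v.2 := fun v => by
    rw [← f.apply_eq_mulVec_of_apply_single]
    exact hf v
  refine ⟨X, ⟨Set.ext fun v => ?_, fun w hw => ?_⟩, fun Y ⟨hY, _⟩ => ?_⟩
  · rw [hW]
    exact ⟨fun hv => ⟨v.2, Prod.ext hv rfl⟩, by rintro ⟨w, rfl⟩; rfl⟩
  · have hneg := Wneg (X *ᵥ w, w) ((hW _).2 rfl) fun hw₀ => hw congr(($hw₀).2)
    rw [hform, Quaternion.re_sub] at hneg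
    rw [star_dotProduct_one_sub_conjTranspose_mul_mulVec, Quaternion.re_sub]
    linarith
  · exact ext_iff_mulVec.2 fun w => (hW (Y *ᵥ w, w)).1 (hY ▸ ⟨w, rfl⟩)
end
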